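/- Define recursively for finite graphs Ĝ, vertices v, and t ∈ ℕ: Φ_Ĝ(v,0) = 1; for t > 0, if v has no neighbors then Φ_Ĝ(v,t) = 1/(1+λ), and otherwise Φ_Ĝ(v,t) = (1 + λ·∏_{i=1}^{k} Φ_{Ĝ_{i-1}}(v_i, t-1))^{-1} where N(v) = {v_1,...,v_k}, Ĝ_0 is induced by V(Ĝ) \ {v}, and Ĝ_i by V(Ĝ) \ {v,v_1,...,v_i}. Define Ψ identically except Ψ_Ĝ(v,0) = 0. Then for all finite G, v, t: Ψ_G(v,2t) ≤ P_G(v ∉ I) ≤ Φ_G(v,2t) and Φ_G(v,2t+1) ≤ P_G(v ∉ I) ≤ Ψ_G(v,2t+1), where P_G is the hard-core Gibbs measure with activity λ. -/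

import Mathlib

/-!
The exact marginal `P_A(v) = Z(A - v) / Z(A)` satisfies the same recursion as `Φ` and `Ψ`:
deleting `v` or occupying it gives `Z(A) = Z(A - v) + λ Z(A - N[v])`, and `Z(A - N[v]) / Z(A - v)`
telescopes into the product `∏ᵢ P_{Aᵢ₋₁}(vᵢ)` along the sequential deletions. The recursion step
`f ↦ (1 + λ ∏ᵢ f(Aᵢ₋₁, vᵢ))⁻¹` reverses order on nonnegative functions, so the trivial bounds
`0 ≤ P ≤ 1` (that is, `Ψ(0) ≤ P ≤ Φ(0)`) swap sides at every level.
-/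

open Finset

/-- Sequential product `f A u₁ · f (A \ {u₁}) u₂ · …` along a list of vertices. -/
noncomputable def seqProd {V : Type*} [DecidableEq V] (f : Finset V → V → ℝ) :
    Finset V → List V → ℝ
  | _, [] => 1
  | A, u :: rest => f A u * seqProd f (A.erase u) rest

/-- The recursively defined quantity `Φ` (for `base = 1`) resp. `Ψ` (for `base = 0`)
of the hard-core computation-tree recursion: `F(0, A, v) = base`; for `t > 0`,
`F(t, A, v) = 1/(1+λ)` if `v` has no neighbors in `A`, and otherwise
`F(t, A, v) = (1 + λ · ∏ᵢ F(t-1, Aᵢ₋₁, vᵢ))⁻¹` over the neighbors `v₁, …, v_k` of `v`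
in `A`, with sequential vertex deletions. -/
noncomputable def hcRec {V : Type*} [Fintype V] [LinearOrder V] (G : SimpleGraph V)
    [DecidableRel G.Adj] (lam base : ℝ) : ℕ → Finset V → V → ℝ
  | 0, _, _ => base
  | t + 1, A, v =>
    if (G.neighborFinset v ∩ A.erase v) = ∅ then (1 + lam)⁻¹
    else (1 + lam * seqProd (hcRec G lam base t) (A.erase v)
            ((G.neighborFinset v ∩ A.erase v).sort (· ≤ ·)))⁻¹

/-- Hard-core partition function of the subgraph induced on `A`. -/
noncomputable def hcZ {V : Type*} [DecidableEq V] (G : SimpleGraph V) [DecidableRel G.Adj]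
    (lam : ℝ) (A : Finset V) : ℝ :=
  ∑ I ∈ A.powerset.filter (fun I => ∀ u ∈ I, ∀ w ∈ I, ¬ G.Adj u w), lam ^ I.card

/-- Probability that `v` is unoccupied under the hard-core measure on the
subgraph induced on `A`. -/
noncomputable def hcPnot {V : Type*} [DecidableEq V] (G : SimpleGraph V) [DecidableRel G.Adj]
    (lam : ℝ) (A : Finset V) (v : V) : ℝ :=
  (∑ I ∈ A.powerset.filter (fun I => (∀ u ∈ I, ∀ w ∈ I, ¬ G.Adj u w) ∧ v ∉ I),
      lam ^ I.card) / hcZ G lam A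

section PartitionFunction

variable {V : Type*} [DecidableEq V] (G : SimpleGraph V)

lemma forall_adj_insert_iff {v : V} {I : Finset V} :
    (∀ u ∈ insert v I, ∀ w ∈ insert v I, ¬ G.Adj u w) ↔
      (∀ u ∈ I, ¬ G.Adj v u) ∧ ∀ u ∈ I, ∀ w ∈ I, ¬ G.Adj u w := by
  simp only [forall_mem_insert, G.loopless.irrefl, not_false_eq_true, true_and]
  constructor
  · rintro ⟨hv, hI⟩
    exact ⟨hv, fun u hu => (hI u hu).2⟩
  · rintro ⟨hv, hI⟩
    exact ⟨hv, fun u hu => ⟨fun h => hv u hu h.symm, hI u hu⟩⟩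

variable [DecidableRel G.Adj] {lam : ℝ}

lemma hcZ_pos (hlam : 0 ≤ lam) (A : Finset V) : 0 < hcZ G lam A :=
  sum_pos' (fun I _ => pow_nonneg hlam _) ⟨∅, by simp⟩

lemma hcZ_mono (hlam : 0 ≤ lam) {A B : Finset V} (hAB : A ⊆ B) : hcZ G lam A ≤ hcZ G lam B :=
  sum_le_sum_of_subset_of_nonneg (filter_subset_filter _ (powerset_mono.mpr hAB))
    fun _ _ _ => pow_nonneg hlam _

lemma hcPnot_eq_div (A : Finset V) (v : V) :
    hcPnot G lam A v = hcZ G lam (A.erase v) / hcZ G lam A := by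
  refine congrArg (· / _) (sum_congr ?_ fun _ _ => rfl)
  ext I
  simp only [mem_filter, mem_powerset, subset_erase]
  tauto

lemma hcPnot_nonneg (hlam : 0 ≤ lam) (A : Finset V) (v : V) : 0 ≤ hcPnot G lam A v := by
  rw [hcPnot_eq_div]
  exact div_nonneg (hcZ_pos G hlam _).le (hcZ_pos G hlam _).le

lemma hcPnot_le_one (hlam : 0 ≤ lam) (A : Finset V) (v : V) : hcPnot G lam A v ≤ 1 := by
  rw [hcPnot_eq_div, div_le_one (hcZ_pos G hlam _)]
  exact hcZ_mono G hlam (erase_subset v A)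

lemma hcZ_eq_add_of_mem {A : Finset V} {v : V} (hv : v ∈ A) :
    hcZ G lam A = hcZ G lam (A.erase v)
      + lam * hcZ G lam ((A.erase v).filter (fun u => ¬ G.Adj v u)) := by
  have hpow : ((A.erase v).filter (fun u => ¬ G.Adj v u)).powerset
      = (A.erase v).powerset.filter (fun I => ∀ u ∈ I, ¬ G.Adj v u) := by
    ext I
    simp only [mem_powerset, mem_filter, subset_iff]
    exact ⟨fun h => ⟨fun u hu => (h hu).1, fun u hu => (h hu).2⟩,
      fun h u hu => ⟨h.1 hu, h.2 u hu⟩⟩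
  simp only [hcZ, hpow, sum_filter, mul_sum]
  rw [← insert_erase hv, sum_powerset_insert (notMem_erase v A),
    erase_insert (notMem_erase v A)]
  congr 1
  refine sum_congr rfl fun I hI => ?_
  have hvI : v ∉ I := fun h => notMem_erase v A (mem_powerset.mp hI h)
  simp only [forall_adj_insert_iff G, card_insert_of_notMem hvI, ite_and]
  split_ifs <;> ring

end PartitionFunction

section SeqProd

variable {V : Type*} [DecidableEq V]

lemma seqProd_div_eq {g : Finset V → ℝ} (hg : ∀ B, g B ≠ 0) (L : List V) (B : Finset V) :
    seqProd (fun B u => g (B.erase u) / g B) B L = g (B \ L.toFinset) / g B := by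
  induction L generalizing B with
  | nil => simp [seqProd, div_self (hg B)]
  | cons u L ih =>
    have hsdiff : B.erase u \ L.toFinset = B \ (u :: L).toFinset := by
      ext w
      simp only [mem_sdiff, mem_erase, List.toFinset_cons, mem_insert]
      tauto
    rw [seqProd, ih, hsdiff]
    field_simp [hg]

lemma seqProd_nonneg {f : Finset V → V → ℝ} (hf : ∀ B u, 0 ≤ f B u) (L : List V)
    (B : Finset V) : 0 ≤ seqProd f B L := by
  induction L generalizing B with
  | nil => exact zero_le_one
  | cons u L ih => exact mul_nonneg (hf B u) (ih _)

lemma seqProd_le_seqProd {f g : Finset V → V → ℝ} (hf : ∀ B u, 0 ≤ f B u)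
    (hfg : ∀ B u, u ∈ B → f B u ≤ g B u) {L : List V} (hL : L.Nodup) {B : Finset V}
    (hLB : ∀ u ∈ L, u ∈ B) : seqProd f B L ≤ seqProd g B L := by
  induction L generalizing B with
  | nil => exact le_rfl
  | cons u L ih =>
    obtain ⟨huL, hL⟩ := List.nodup_cons.mp hL
    have hu : u ∈ B := hLB u List.mem_cons_self
    have hLB' : ∀ w ∈ L, w ∈ B.erase u := fun w hw =>
      mem_erase.mpr ⟨fun h => huL (h ▸ hw), hLB w (List.mem_cons_of_mem u hw)⟩
    exact mul_le_mul (hfg B u hu) (ih hL hLB') (seqProd_nonneg hf L _)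
      ((hf B u).trans (hfg B u hu))

end SeqProd

section Recursion

variable {V : Type*} [Fintype V] [LinearOrder V] (G : SimpleGraph V) [DecidableRel G.Adj]
  {lam : ℝ}

noncomputable def hcStep (lam : ℝ) (f : Finset V → V → ℝ) (A : Finset V) (v : V) : ℝ :=
  (1 + lam * seqProd f (A.erase v) ((G.neighborFinset v ∩ A.erase v).sort (· ≤ ·)))⁻¹

lemma hcRec_succ (base : ℝ) (t : ℕ) (A : Finset V) (v : V) :
    hcRec G lam base (t + 1) A v = hcStep G lam (hcRec G lam base t) A v := by
  rw [hcRec, hcStep]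
  split_ifs with h
  · simp [h, seqProd]
  · rfl

lemma hcStep_nonneg (hlam : 0 ≤ lam) {f : Finset V → V → ℝ} (hf : ∀ B u, 0 ≤ f B u)
    (A : Finset V) (v : V) : 0 ≤ hcStep G lam f A v := by
  have := seqProd_nonneg hf ((G.neighborFinset v ∩ A.erase v).sort (· ≤ ·)) (A.erase v)
  unfold hcStep
  positivity

lemma hcStep_anti (hlam : 0 ≤ lam) {f g : Finset V → V → ℝ} (hf : ∀ B u, 0 ≤ f B u)
    (hfg : ∀ B u, u ∈ B → f B u ≤ g B u) (A : Finset V) (v : V) :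
    hcStep G lam g A v ≤ hcStep G lam f A v := by
  have hle := seqProd_le_seqProd hf hfg (sort_nodup (G.neighborFinset v ∩ A.erase v) (· ≤ ·))
    (B := A.erase v) fun u hu => (mem_inter.mp (mem_sort _ |>.mp hu)).2
  have hpos := seqProd_nonneg hf ((G.neighborFinset v ∩ A.erase v).sort (· ≤ ·)) (A.erase v)
  unfold hcStep
  gcongr

lemma hcRec_nonneg (hlam : 0 ≤ lam) {base : ℝ} (hbase : 0 ≤ base) (t : ℕ) (A : Finset V)
    (v : V) : 0 ≤ hcRec G lam base t A v := by
  induction t generalizing A v with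
  | zero => exact hbase
  | succ t ih => exact hcRec_succ G base t A v ▸ hcStep_nonneg G hlam ih A v

lemma hcPnot_eq_hcStep (hlam : 0 ≤ lam) {A : Finset V} {v : V} (hv : v ∈ A) :
    hcPnot G lam A v = hcStep G lam (hcPnot G lam) A v := by
  have hP : hcPnot G lam = fun B u => hcZ G lam (B.erase u) / hcZ G lam B :=
    funext₂ (hcPnot_eq_div G)
  have hnbrs : A.erase v \ ((G.neighborFinset v ∩ A.erase v).sort (· ≤ ·)).toFinset
      = (A.erase v).filter (fun u => ¬ G.Adj v u) := by
    ext u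
    simp [sort_toFinset]
  have h₀ := hcZ_pos G hlam (A.erase v)
  have h₁ := hcZ_pos G hlam ((A.erase v).filter (fun u => ¬ G.Adj v u))
  conv_rhs => rw [hcStep, hP, seqProd_div_eq (fun B => (hcZ_pos G hlam B).ne'), hnbrs]
  rw [hcPnot_eq_div, hcZ_eq_add_of_mem G hv]
  field_simp

lemma hcRec_succ_bounds (hlam : 0 ≤ lam) {lo hi : ℝ} (hlo : 0 ≤ lo) {t : ℕ}
    (h : ∀ A v, v ∈ A →
      hcRec G lam lo t A v ≤ hcPnot G lam A v ∧ hcPnot G lam A v ≤ hcRec G lam hi t A v)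
    {A : Finset V} {v : V} (hv : v ∈ A) :
    hcRec G lam hi (t + 1) A v ≤ hcPnot G lam A v
      ∧ hcPnot G lam A v ≤ hcRec G lam lo (t + 1) A v := by
  rw [hcRec_succ, hcRec_succ, hcPnot_eq_hcStep G hlam hv]
  exact ⟨hcStep_anti G hlam (hcPnot_nonneg G hlam) (fun B u hu => (h B u hu).2) A v,
    hcStep_anti G hlam (hcRec_nonneg G hlam hlo t) (fun B u hu => (h B u hu).1) A v⟩

lemma hcRec_even_bounds (hlam : 0 ≤ lam) (t : ℕ) {A : Finset V} {v : V} (hv : v ∈ A) :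
    hcRec G lam 0 (2 * t) A v ≤ hcPnot G lam A v
      ∧ hcPnot G lam A v ≤ hcRec G lam 1 (2 * t) A v := by
  induction t generalizing A v with
  | zero => exact ⟨hcPnot_nonneg G hlam A v, hcPnot_le_one G hlam A v⟩
  | succ t ih =>
    exact hcRec_succ_bounds G hlam zero_le_one
      (fun B u hu => hcRec_succ_bounds G hlam le_rfl (fun _ _ => ih) hu) hv

end Recursion

/-- With `Φ = hcRec G λ 1` and `Ψ = hcRec G λ 0`, for every finite graph
`G`, vertex `v` and `t ∈ ℕ`: `Ψ(2t) ≤ P_G(v ∉ I) ≤ Φ(2t)` and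
`Φ(2t+1) ≤ P_G(v ∉ I) ≤ Ψ(2t+1)`. -/
theorem hardcore_recursive_bounds {V : Type*} [Fintype V] [LinearOrder V]
    (G : SimpleGraph V) [DecidableRel G.Adj] (lam : ℝ) (hlam : 0 < lam)
    (v : V) (t : ℕ) :
    (hcRec G lam 0 (2 * t) Finset.univ v ≤ hcPnot G lam Finset.univ v
      ∧ hcPnot G lam Finset.univ v ≤ hcRec G lam 1 (2 * t) Finset.univ v)
    ∧ (hcRec G lam 1 (2 * t + 1) Finset.univ v ≤ hcPnot G lam Finset.univ v
      ∧ hcPnot G lam Finset.univ v ≤ hcRec G lam 0 (2 * t + 1) Finset.univ v) :=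
  ⟨hcRec_even_bounds G hlam.le t (mem_univ v),
    hcRec_succ_bounds G hlam.le le_rfl (fun _ _ => hcRec_even_bounds G hlam.le t) (mem_univ v)⟩
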